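/- arXiv:2312.07281 — 2 statements merged into one kernel-verified Lean document; each statement's English description precedes it below -/
import Mathlib

section
/- Let Σ', Σ be u×u symmetric positive definite matrices with γ² ≥ λ_max(Σ'^{-1}Σ), let 𝚺' and 𝚺 be the corresponding block 'inflation' matrices with (i,j)-blocks σ'_{ij} 𝟙_{N_i}𝟙_{N_j}^T and σ_{ij} 𝟙_{N_i}𝟙_{N_j}^T respectively, and let K̄ be any positive semidefinite matrix of matching size. Then γ² (𝚺' ∘ K̄) − (𝚺 ∘ K̄) is positive semidefinite, i.e., γ² K_{Σ'} ⪰ K_Σ for the multi-task Gram matrices K_{Σ'} = 𝚺' ∘ K̄ and K_Σ = 𝚺 ∘ K̄. -/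
open Matrix

/-- The block "inflation" matrix whose `(i,j)` block is `σ i j • 𝟙_{N i} 𝟙_{N j}ᵀ`. -/
def blockOnes {u : ℕ} (N : Fin u → ℕ) (S : Matrix (Fin u) (Fin u) ℝ) :
    Matrix ((i : Fin u) × Fin (N i)) ((i : Fin u) × Fin (N i)) ℝ :=
  Matrix.of fun p q => S p.1 q.1

/-! Let `R = √S'`. Since `S'⁻¹ S = R⁻¹ (R⁻¹ S R⁻¹) R`, the hermitian matrix `R⁻¹ S R⁻¹` has
spectrum at most `γ²`, so `R⁻¹ S R⁻¹ ≤ γ² • 1` and, conjugating by `R`, `S ≤ γ² • S'` in the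
Loewner order. Block inflation is the reindexing `M ↦ M.submatrix Sigma.fst Sigma.fst`, and by
the Schur product theorem the Hadamard product with `Kbar ⪰ 0` is monotone; both therefore carry
this inequality to the Gram matrices. -/

open scoped MatrixOrder ComplexOrder

namespace Matrix

variable {n 𝕜 : Type*} [RCLike 𝕜]

theorem le_smul_of_spectrum_inv_mul_le [Fintype n] [DecidableEq n] {A B : Matrix n n 𝕜}
    (hA : A.PosDef) (hB : B.IsHermitian) {c : ℝ} (h : ∀ μ ∈ spectrum ℝ (A⁻¹ * B), μ ≤ c) :
    B ≤ c • A := by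
  set R := CFC.sqrt A
  have hR : R.IsHermitian := (CFC.sqrt_nonneg A).posSemidef.isHermitian
  have hRR : R * R = A := CFC.sqrt_mul_sqrt_self A hA.posSemidef.nonneg
  have hRu : IsUnit R := hA.isStrictlyPositive.isUnit_cfcSqrt
  have hdet : IsUnit R.det := (R.isUnit_iff_isUnit_det).mp hRu
  set B' := R⁻¹ * B * R⁻¹
  have hspec : spectrum ℝ B' = spectrum ℝ (A⁻¹ * B) := by
    have : A⁻¹ * B = (↑hRu.unit⁻¹ : Matrix n n 𝕜) * B' * hRu.unit := by
      rw [coe_units_inv, hRu.unit_spec, ← hRR, mul_inv_rev]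
      simp only [B', mul_assoc, nonsing_inv_mul R hdet, mul_one]
    rw [this, spectrum.units_conjugate']
  have hB' : IsSelfAdjoint B' := by
    simpa [star_eq_conjTranspose, hR.inv.eq] using hB.isSelfAdjoint.conjugate R⁻¹
  have hle : B' ≤ algebraMap ℝ _ c := le_algebraMap_of_spectrum_le (hspec ▸ h) hB'
  calc B = R * B' * R := by
        simp only [B', ← mul_assoc, mul_nonsing_inv R hdet, one_mul]
        simp only [mul_assoc, nonsing_inv_mul R hdet, mul_one]
    _ ≤ R * algebraMap ℝ _ c * R := hR.isSelfAdjoint.conjugate_le_conjugate hle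
    _ = c • A := by
        rw [Algebra.algebraMap_eq_smul_one, mul_smul_comm, mul_one, smul_mul_assoc, hRR]

theorem hadamard_le_hadamard_of_le {A B K : Matrix n n 𝕜} (hAB : A ≤ B) (hK : K.PosSemidef) :
    A ⊙ K ≤ B ⊙ K := by
  have hsub : B ⊙ K - A ⊙ K = (B - A) ⊙ K := by
    ext i j
    simp only [sub_apply, hadamard_apply, sub_mul]
  rw [le_iff, hsub]
  exact (le_iff.mp hAB).hadamard hK

end Matrix

section blockOnes

variable {u : ℕ} (N : Fin u → ℕ)

theorem blockOnes_eq_submatrix (S : Matrix (Fin u) (Fin u) ℝ) :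
    blockOnes N S = S.submatrix Sigma.fst Sigma.fst :=
  rfl

theorem blockOnes_smul (c : ℝ) (S : Matrix (Fin u) (Fin u) ℝ) :
    blockOnes N (c • S) = c • blockOnes N S :=
  rfl

theorem blockOnes_mono {S T : Matrix (Fin u) (Fin u) ℝ} (h : S ≤ T) :
    blockOnes N S ≤ blockOnes N T := by
  rw [le_iff, blockOnes_eq_submatrix, blockOnes_eq_submatrix]
  exact (le_iff.mp h).submatrix Sigma.fst

end blockOnes

theorem gram_loewner_of_eig_bound {u : ℕ} (N : Fin u → ℕ)
    (S' S : Matrix (Fin u) (Fin u) ℝ) (hS' : S'.PosDef) (hS : S.PosDef) (γ : ℝ)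
    (hγ : ∀ μ ∈ spectrum ℝ (S'⁻¹ * S), μ ≤ γ ^ 2)
    (Kbar : Matrix ((i : Fin u) × Fin (N i)) ((i : Fin u) × Fin (N i)) ℝ)
    (hK : Kbar.PosSemidef) :
    (γ ^ 2 • Matrix.hadamard (blockOnes N S') Kbar
      - Matrix.hadamard (blockOnes N S) Kbar).PosSemidef := by
  have hSS' : S ≤ γ ^ 2 • S' := le_smul_of_spectrum_inv_mul_le hS' hS.isHermitian hγ
  rw [← le_iff, ← smul_hadamard, ← blockOnes_smul]
  exact hadamard_le_hadamard_of_le (blockOnes_mono N hSS') hK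
end

section
/- Let K and K' be two reproducing kernel Hilbert space kernels on a set X with K'' (x,x') = Σ''·k(x,x') and K'(x,x') = Σ'·k(x,x') for a scalar base kernel k and positive definite matrices Σ', Σ''. If λ² ≥ λ_max((Σ'')^{-1}Σ'), then for every vector-valued function μ in the RKHS of K'', λ² ‖μ‖²_{K'} ≥ ‖μ‖²_{K''}. -/
/-!
Conjugating by `T = Σ'^{1/2}` turns `Σ''⁻¹ Σ'` into the self-adjoint matrix `T Σ''⁻¹ T` with the
same spectrum, so the spectral bound is the Loewner inequality `Σ''⁻¹ ≤ λ² Σ'⁻¹`. Both norms are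
the pairing `P ↦ 𝟙ᵀ (P ∘ M) 𝟙` evaluated at `P = Σ⁻¹`, and by the Schur product theorem this
pairing is monotone in `P` when `M` is positive semidefinite.
-/

open Matrix

/-- The squared multi-task RKHS norm of a vector-valued function whose latent
components have Gram matrix `M`, for kernel `Σ·k`: `‖μ‖²_K = 𝟙ᵀ(Σ⁻¹ ∘ M)𝟙`. -/
noncomputable def multiTaskNormSq {u : ℕ} (S M : Matrix (Fin u) (Fin u) ℝ) : ℝ :=
  (fun _ : Fin u => (1 : ℝ)) ⬝ᵥ ((Matrix.hadamard S⁻¹ M) *ᵥ fun _ => (1 : ℝ))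

open scoped MatrixOrder ComplexOrder

namespace Matrix

variable {n : Type*} [Fintype n]

theorem PosDef.inv_le_smul_inv_of_spectrum_inv_mul_le [DecidableEq n] {𝕜 : Type*} [RCLike 𝕜]
    {A B : Matrix n n 𝕜} (hA : A.PosDef) (hB : B.PosDef) {c : ℝ}
    (hc : ∀ x ∈ spectrum ℝ (B⁻¹ * A), x ≤ c) : B⁻¹ ≤ c • A⁻¹ := by
  obtain ⟨T, hT⟩ := (CFC.isUnit_sqrt_iff A hA.posSemidef.nonneg).2 hA.isUnit
  have hTT : (T : Matrix n n 𝕜) * T = A := hT ▸ CFC.sqrt_mul_sqrt_self A hA.posSemidef.nonneg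
  have hT_sa : IsSelfAdjoint (T : Matrix n n 𝕜) := hT ▸ (CFC.sqrt_nonneg A).isSelfAdjoint
  have hTinv_sa : IsSelfAdjoint (↑T⁻¹ : Matrix n n 𝕜) := by
    rw [Matrix.coe_units_inv]
    exact IsHermitian.inv hT_sa
  have hspec : spectrum ℝ (T * B⁻¹ * T : Matrix n n 𝕜) = spectrum ℝ (B⁻¹ * A) := by
    rw [← hTT, ← spectrum.units_conjugate (u := T) (a := B⁻¹ * (T * T))]
    simp [mul_assoc]
  have hG : (T * B⁻¹ * T : Matrix n n 𝕜) ≤ algebraMap ℝ _ c :=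
    le_algebraMap_of_spectrum_le (hspec ▸ hc)
      (hB.inv.isHermitian.isSelfAdjoint.conjugate_self hT_sa)
  calc B⁻¹ = (↑T⁻¹ * (T * B⁻¹ * T) * ↑T⁻¹ : Matrix n n 𝕜) := by simp [mul_assoc]
    _ ≤ ↑T⁻¹ * algebraMap ℝ _ c * ↑T⁻¹ := by exact hTinv_sa.conjugate_le_conjugate hG
    _ = c • A⁻¹ := by
      rw [Algebra.algebraMap_eq_smul_one, ← hTT, Matrix.mul_inv_rev, ← Matrix.coe_units_inv]
      simp

theorem one_dotProduct_hadamard_mulVec_one_le_of_le {P Q M : Matrix n n ℝ} (hPQ : P ≤ Q)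
    (hM : M.PosSemidef) : 1 ⬝ᵥ (P ⊙ M) *ᵥ 1 ≤ 1 ⬝ᵥ (Q ⊙ M) *ᵥ 1 := by
  have hgap := (le_iff.mp hPQ).hadamard hM |>.dotProduct_mulVec_nonneg 1
  rw [star_one] at hgap
  rw [← add_sub_cancel P Q, add_hadamard, add_mulVec, dotProduct_add]
  exact le_add_of_nonneg_right hgap

end Matrix

theorem rkhs_norm_comparison {u : ℕ} (S' S'' : Matrix (Fin u) (Fin u) ℝ)
    (hS' : S'.PosDef) (hS'' : S''.PosDef) (lam : ℝ)
    (hlam : ∀ μ ∈ spectrum ℝ (S''⁻¹ * S'), μ ≤ lam ^ 2) :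
    ∀ M : Matrix (Fin u) (Fin u) ℝ, M.PosSemidef →
      multiTaskNormSq S'' M ≤ lam ^ 2 * multiTaskNormSq S' M := by
  intro M hM
  have hgap : S''⁻¹ ≤ lam ^ 2 • S'⁻¹ := hS'.inv_le_smul_inv_of_spectrum_inv_mul_le hS'' hlam
  calc multiTaskNormSq S'' M ≤ 1 ⬝ᵥ ((lam ^ 2 • S'⁻¹) ⊙ M) *ᵥ 1 :=
        one_dotProduct_hadamard_mulVec_one_le_of_le hgap hM
    _ = lam ^ 2 * multiTaskNormSq S' M := by
      rw [smul_hadamard, smul_mulVec, dotProduct_smul, smul_eq_mul, multiTaskNormSq]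
      rfl
end
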